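/- Let v ≠ w be nonadjacent, unlooped twin vertices of a weighted marked graph G (having the same neighbors outside {v,w}), both marked u. Then [G] = [(G−w)'], where (G−w)' is G−w with the weights of v changed to α'(v) = α(v)α(w)d + α(v)β(w) + β(v)α(w) and β'(v) = β(v)β(w). -/

import Mathlib

/-- The six vertex marks of a multiply marked graph. -/
inductive Mark : Type
  | un | r | c | cr | u | ur
deriving DecidableEq

/-- A (multiply marked) graph: symmetric irreflexive adjacency, loops,
marks, and a number of free loops. -/
structure MGraph (V : Type) [DecidableEq V] : Type where
  adj : V → V → Bool
  adj_symm : ∀ x y, adj x y = adj y x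
  adj_irrefl : ∀ x, adj x x = false
  loop : V → Bool
  mark : V → Mark
  freeLoops : ℕ

namespace MGraph

variable {V : Type} [DecidableEq V]

/-- The mark change at `v` itself: unmarked↔u, r↔ur, c↔cr. -/
def flipV : Mark → Mark
  | .un => .u | .u => .un | .r => .ur | .ur => .r | .c => .cr | .cr => .c

/-- The mark change at neighbors of `v`: unmarked↔r, c↔ur, u↔cr. -/
def flipN : Mark → Mark
  | .un => .r | .r => .un | .c => .ur | .ur => .c | .u => .cr | .cr => .u

/-- The marked local complement `G_cru^v`. -/
def mlc (G : MGraph V) (v : V) : MGraph V where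
  adj x y := if x ≠ y ∧ G.adj v x = true ∧ G.adj v y = true then !(G.adj x y) else G.adj x y
  adj_symm := by
    intro x y
    try dsimp only
    by_cases h : x ≠ y ∧ G.adj v x = true ∧ G.adj v y = true
    · rw [if_pos h, if_pos ⟨h.1.symm, h.2.2, h.2.1⟩, G.adj_symm]
    · rw [if_neg h, if_neg (fun h' => h ⟨h'.1.symm, h'.2.2, h'.2.1⟩), G.adj_symm]
  adj_irrefl := by
    intro x
    try dsimp only
    rw [if_neg (fun h => h.1 rfl), G.adj_irrefl]
  loop := G.loop
  mark x := if x = v then flipV (G.mark x)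
            else if G.adj v x = true then flipN (G.mark x) else G.mark x
  freeLoops := G.freeLoops

end MGraph

/-- Whether a mark contains the letter `r`. -/
def Mark.hasR : Mark → Bool
  | .r => true | .cr => true | .ur => true | _ => false

/-- Whether a mark is `c` or `cr`. -/
def Mark.isC : Mark → Bool
  | .c => true | .cr => true | _ => false

/-- Whether a mark is `u` or `ur`. -/
def Mark.isU : Mark → Bool
  | .u => true | .ur => true | _ => false

/-- GF(2)-nullity of a square matrix. -/
noncomputable def nullity {n : Type} [Fintype n] (M : Matrix n n (ZMod 2)) : ℕ :=
  Fintype.card n - M.rank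

namespace MGraph

variable {V : Type} [DecidableEq V]

/-- The matrix `𝒜(G) + Δ_T` over GF(2): off-diagonal entries record adjacency,
and the diagonal entry at `x` is the loop contribution plus the `Δ_T` entry,
which is `1` iff (`x ∈ T` and the mark of `x` has no `r`) or (`x ∉ T` and it has an `r`). -/
def matT (G : MGraph V) (T : Finset V) : Matrix V V (ZMod 2) :=
  Matrix.of fun x y =>
    if x = y then
      (if G.loop x = true then 1 else 0) +
        (if ((x ∈ T) ↔ (G.mark x).hasR = false) then 1 else 0)
    else if G.adj x y = true then 1 else 0

/-- The vertices whose rows and columns are kept in `𝒜(G)_T`: delete `x` iff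
`x` is marked `c`/`cr` with diagonal entry `0`, or marked `u`/`ur` with diagonal entry `1`. -/
def keep (G : MGraph V) (T : Finset V) (x : V) : Bool :=
  !(((G.mark x).isC && decide (G.matT T x x = 0)) ||
    ((G.mark x).isU && decide (G.matT T x x = 1)))

/-- The matrix `𝒜(G)_T`, the submatrix of `𝒜(G) + Δ_T` on the kept vertices. -/
def subMat (G : MGraph V) (T : Finset V) :
    Matrix {x : V // G.keep T x = true} {x : V // G.keep T x = true} (ZMod 2) :=
  (G.matT T).submatrix Subtype.val Subtype.val

/-- The marked-graph bracket polynomial, evaluated at elements `A`, `B`, `d`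
of a commutative ring. -/
noncomputable def bracket (G : MGraph V) [Fintype V] {R : Type*} [CommRing R]
    (A B d : R) : R :=
  d ^ G.freeLoops *
    ∑ T : Finset V, A ^ (Fintype.card V - T.card) * B ^ T.card * d ^ nullity (G.subMat T)

/-- The weighted marked-graph bracket polynomial with vertex weights `α`, `β`. -/
noncomputable def wbracket (G : MGraph V) [Fintype V] {R : Type*} [CommRing R]
    (d : R) (α β : V → R) : R :=
  d ^ G.freeLoops *
    ∑ T : Finset V, (∏ x ∈ Tᶜ, α x) * (∏ x ∈ T, β x) * d ^ nullity (G.subMat T)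

/-- Deletion of the vertex `v`. -/
def delete (G : MGraph V) (v : V) : MGraph {x : V // x ≠ v} where
  adj x y := G.adj x.val y.val
  adj_symm := fun x y => G.adj_symm x.val y.val
  adj_irrefl := fun x => G.adj_irrefl x.val
  loop x := G.loop x.val
  mark x := G.mark x.val
  freeLoops := G.freeLoops

/-- Change the mark of the vertex `v` to `m`. -/
def setMark (G : MGraph V) (v : V) (m : Mark) : MGraph V :=
  { G with mark := fun x => if x = v then m else G.mark x }

/-- The one-vertex graph with given loop status and mark (and no free loops). -/
def single (l : Bool) (m : Mark) : MGraph Unit where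
  adj _ _ := false
  adj_symm := fun _ _ => rfl
  adj_irrefl := fun _ => rfl
  loop _ := l
  mark _ := m
  freeLoops := 0

end MGraph

/-!
Split the state sum according to whether `v` and `w` lie in `T`. An unlooped vertex marked `u`
survives in `𝒜(G)_T` exactly when it is not in `T`. So when `w ∈ T`, `𝒜(G)_T` is the matrix of
`G − w` for the restricted state; the case `v ∈ T`, `w ∉ T` reduces to this by the automorphism
swapping the twins; and when neither lies in `T`, rows and columns `v` and `w` of `𝒜(G)_T`
coincide, so deleting `w` lowers the nullity by exactly one. Hence the three states in which not
both of `v`, `w` lie in `T` collapse onto the state of `G − w` with `v` outside, with total weight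
`α(v)α(w)d + α(v)β(w) + β(v)α(w)`, and the state containing both gives `β(v)β(w)`.
-/

open Function

theorem Matrix.rank_submatrix_of_surjective {m n m₀ n₀ R : Type*} [Fintype n] [Fintype n₀]
    [CommRing R] [StrongRankCondition R] (A : Matrix m n R) {r : m₀ → m} {c : n₀ → n}
    (hr : Surjective r) (hc : Surjective c) : (A.submatrix r c).rank = A.rank := by
  refine le_antisymm (A.rank_submatrix_le r c) ?_
  calc A.rank = ((A.submatrix r c).submatrix (surjInv hr) (surjInv hc)).rank := by
        rw [Matrix.submatrix_submatrix, (rightInverse_surjInv hr).comp_eq_id,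
          (rightInverse_surjInv hc).comp_eq_id, Matrix.submatrix_id_id]
    _ ≤ (A.submatrix r c).rank := Matrix.rank_submatrix_le _ _ _

theorem nullity_submatrix_add_card {m n : Type} [Fintype m] [Fintype n]
    (A : Matrix n n (ZMod 2)) {f : m → n} (hf : Surjective f) :
    nullity (A.submatrix f f) + Fintype.card n = nullity A + Fintype.card m := by
  have hrank := A.rank_submatrix_of_surjective hf hf
  have hle := A.rank_le_card_height
  have hle' := (A.submatrix f f).rank_le_card_height
  unfold nullity
  omega

theorem nullity_submatrix_of_bijective {m n : Type} [Fintype m] [Fintype n]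
    (A : Matrix n n (ZMod 2)) {f : m → n} (hf : Bijective f) :
    nullity (A.submatrix f f) = nullity A := by
  have := nullity_submatrix_add_card A hf.surjective
  rw [Fintype.card_of_bijective hf] at this
  omega

theorem nullity_eq_nullity_submatrix_add_one_of_duplicate {m : Type} [Fintype m]
    (A : Matrix m m (ZMod 2)) {p : m → Prop} [DecidablePred p] {i j : m} (hi : ¬p i) (hj : p j)
    (hp : ∀ k, ¬p k → k = i) (hrow : ∀ k, A i k = A j k) (hcol : ∀ k, A k i = A k j) :
    nullity A = nullity (A.submatrix (Subtype.val : {k // p k} → m) Subtype.val) + 1 := by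
  let r : m → {k // p k} := fun k => if h : p k then ⟨k, h⟩ else ⟨j, hj⟩
  have hr : Surjective r := fun k => ⟨k, dif_pos k.2⟩
  have hA : (A.submatrix Subtype.val Subtype.val).submatrix r r = A := by
    ext k l
    by_cases hk : p k <;> by_cases hl : p l
    · simp [r, hk, hl]
    · obtain rfl := hp l hl; simp [r, hk, hl, hcol]
    · obtain rfl := hp k hk; simp [r, hk, hl, hrow]
    · obtain rfl := hp k hk; obtain rfl := hp l hl; simp [r, hk, hrow, hcol]
  have hcard : Fintype.card {k // ¬p k} = 1 :=
    Fintype.card_eq_one_iff.2 ⟨⟨i, hi⟩, fun k => Subtype.ext (hp k k.2)⟩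
  have := nullity_submatrix_add_card (A.submatrix (Subtype.val : {k // p k} → m) Subtype.val) hr
  rw [hA] at this
  have := Fintype.card_subtype_compl p
  have := Fintype.card_subtype_le p
  omega

theorem Fintype.sum_finset_eq_sum_finset_subtype_ne {α M : Type*} [Fintype α] [DecidableEq α]
    [AddCommMonoid M] (a : α) (f : Finset α → M) :
    ∑ T, f T = ∑ T : Finset {x // x ≠ a},
      (f (T.map (Embedding.subtype _)) + f (insert a (T.map (Embedding.subtype _)))) := by
  rw [Finset.sum_add_distrib, ← Finset.sum_filter_not_add_sum_filter _ (a ∈ ·)]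
  congr 1
  · exact Finset.sum_nbij' (fun T => T.subtype (· ≠ a)) (fun T => T.map (Embedding.subtype _))
      (by simp) (by simp) (fun T hT => by simp_all [Finset.filter_ne'])
      (fun T _ => by ext x; simp [x.2]) (fun T hT => by simp_all [Finset.filter_ne'])
  · exact Finset.sum_nbij' (fun T => T.subtype (· ≠ a))
      (fun T => insert a (T.map (Embedding.subtype _))) (by simp) (by simp)
      (fun T hT => by simp_all [Finset.filter_ne'])
      (fun T _ => by ext x; simp [x.2]) (fun T hT => by simp_all [Finset.filter_ne'])

theorem Finset.prod_compl_mul_prod_eq_prod_ite {α M : Type*} [Fintype α] [DecidableEq α]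
    [CommMonoid M] (T : Finset α) (f g : α → M) :
    (∏ x ∈ Tᶜ, g x) * ∏ x ∈ T, f x = ∏ x, if x ∈ T then f x else g x := by
  rw [Finset.prod_ite, mul_comm]
  congr 2 <;> ext <;> simp

theorem Fintype.prod_ite_mem_map_subtype_ne {α M : Type*} [Fintype α] [DecidableEq α]
    [CommMonoid M] (a : α) (T : Finset {x // x ≠ a}) (f g : α → M) :
    ∏ x, (if x ∈ T.map (Embedding.subtype _) then f x else g x) =
      g a * ∏ x : {x // x ≠ a}, if x ∈ T then f x else g x := by
  rw [Fintype.prod_eq_mul_prod_subtype_ne _ a]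
  congr 1
  · simp
  · exact Fintype.prod_congr _ _ fun x => by simp [x.2]

theorem Fintype.prod_ite_mem_insert_map_subtype_ne {α M : Type*} [Fintype α] [DecidableEq α]
    [CommMonoid M] (a : α) (T : Finset {x // x ≠ a}) (f g : α → M) :
    ∏ x, (if x ∈ insert a (T.map (Embedding.subtype _)) then f x else g x) =
      f a * ∏ x : {x // x ≠ a}, if x ∈ T then f x else g x := by
  rw [Fintype.prod_eq_mul_prod_subtype_ne _ a]
  congr 1
  · simp
  · exact Fintype.prod_congr _ _ fun x => by simp [x.2]

namespace MGraph

variable {V : Type} [DecidableEq V]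

theorem matT_of_ne (G : MGraph V) (T : Finset V) {x y : V} (h : x ≠ y) :
    G.matT T x y = if G.adj x y = true then 1 else 0 := by
  simp [matT, h]

theorem matT_comm (G : MGraph V) (T : Finset V) (x y : V) : G.matT T x y = G.matT T y x := by
  by_cases h : x = y
  · rw [h]
  · rw [matT_of_ne G T h, matT_of_ne G T (Ne.symm h), G.adj_symm]

theorem matT_self_of_mark_u {G : MGraph V} {x : V} (hm : G.mark x = .u) (hl : G.loop x = false)
    (T : Finset V) : G.matT T x x = if x ∈ T then 1 else 0 := by
  by_cases h : x ∈ T <;> simp [matT, hm, hl, h, Mark.hasR]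

theorem keep_of_mark_u {G : MGraph V} {x : V} (hm : G.mark x = .u) (hl : G.loop x = false)
    (T : Finset V) : G.keep T x = !decide (x ∈ T) := by
  by_cases h : x ∈ T <;> simp [keep, matT_self_of_mark_u hm hl, hm, h, Mark.isC, Mark.isU]

theorem matT_map_equiv (G : MGraph V) (e : V ≃ V) (hadj : ∀ x y, G.adj (e x) (e y) = G.adj x y)
    (hloop : ∀ x, G.loop (e x) = G.loop x) (hmark : ∀ x, G.mark (e x) = G.mark x)
    (T : Finset V) (x y : V) : G.matT (T.map e.toEmbedding) (e x) (e y) = G.matT T x y := by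
  simp [matT, hadj, hloop, hmark]

theorem keep_map_equiv (G : MGraph V) (e : V ≃ V) (hadj : ∀ x y, G.adj (e x) (e y) = G.adj x y)
    (hloop : ∀ x, G.loop (e x) = G.loop x) (hmark : ∀ x, G.mark (e x) = G.mark x)
    (T : Finset V) (x : V) : G.keep (T.map e.toEmbedding) (e x) = G.keep T x := by
  simp only [keep, matT_map_equiv G e hadj hloop hmark, hmark]

theorem nullity_subMat_map_equiv [Fintype V] (G : MGraph V) (e : V ≃ V)
    (hadj : ∀ x y, G.adj (e x) (e y) = G.adj x y)
    (hloop : ∀ x, G.loop (e x) = G.loop x) (hmark : ∀ x, G.mark (e x) = G.mark x)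
    (T : Finset V) : nullity (G.subMat (T.map e.toEmbedding)) = nullity (G.subMat T) := by
  have hkeep := keep_map_equiv G e hadj hloop hmark T
  let g : {x // G.keep T x = true} → {x // G.keep (T.map e.toEmbedding) x = true} :=
    fun x => ⟨e x, (hkeep x).trans x.2⟩
  have hg : Bijective g := by
    refine ⟨fun x y h => Subtype.ext (e.injective (congrArg Subtype.val h)), fun y => ?_⟩
    refine ⟨⟨e.symm y, ?_⟩, Subtype.ext (e.apply_symm_apply y)⟩
    rw [← hkeep, e.apply_symm_apply]; exact y.2
  have hsub : (G.subMat (T.map e.toEmbedding)).submatrix g g = G.subMat T := by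
    ext x y; exact matT_map_equiv G e hadj hloop hmark T x y
  rw [← hsub, nullity_submatrix_of_bijective _ hg]

section Delete

variable (G : MGraph V) {w : V} {T : Finset V} {T' : Finset {x // x ≠ w}}

theorem matT_delete (hT : ∀ x, x ∈ T' ↔ x.1 ∈ T) (x y : {x // x ≠ w}) :
    (G.delete w).matT T' x y = G.matT T x y := by
  unfold matT delete
  simp only [Matrix.of_apply, hT, Subtype.ext_iff]

theorem keep_delete (hT : ∀ x, x ∈ T' ↔ x.1 ∈ T) (x : {x // x ≠ w}) :
    (G.delete w).keep T' x = G.keep T x := by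
  simp only [keep, matT_delete G hT]; rfl

theorem nullity_subMat_delete [Fintype V] (hT : ∀ x, x ∈ T' ↔ x.1 ∈ T) :
    nullity ((G.delete w).subMat T') = nullity ((G.subMat T).submatrix
      (Subtype.val : {k : {x // G.keep T x = true} // k.1 ≠ w} → _) Subtype.val) := by
  let g : {k : {x // G.keep T x = true} // k.1 ≠ w} → {y // (G.delete w).keep T' y = true} :=
    fun k => ⟨⟨k.1.1, k.2⟩, (keep_delete G hT _).trans k.1.2⟩
  have hg : Bijective g := by
    refine ⟨fun k l h => ?_,
      fun y => ⟨⟨⟨y.1.1, (keep_delete G hT _).symm.trans y.2⟩, y.1.2⟩, rfl⟩⟩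
    simpa [g, Subtype.ext_iff] using h
  have hsub : ((G.delete w).subMat T').submatrix g g =
      (G.subMat T).submatrix Subtype.val Subtype.val := by
    ext k l; exact matT_delete G hT _ _
  rw [← hsub, nullity_submatrix_of_bijective _ hg]

theorem nullity_subMat_of_keep_eq_false [Fintype V] (hw : G.keep T w = false)
    (hT : ∀ x, x ∈ T' ↔ x.1 ∈ T) :
    nullity (G.subMat T) = nullity ((G.delete w).subMat T') := by
  rw [nullity_subMat_delete G hT, nullity_submatrix_of_bijective]
  refine ⟨Subtype.val_injective, fun k => ⟨⟨k, fun h => ?_⟩, rfl⟩⟩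
  have := k.2
  rw [h, hw] at this
  exact Bool.false_ne_true this

theorem nullity_subMat_of_duplicate [Fintype V] {v : V} (hvw : v ≠ w) (hv : G.keep T v = true)
    (hw : G.keep T w = true) (hdup : ∀ x, G.matT T w x = G.matT T v x)
    (hT : ∀ x, x ∈ T' ↔ x.1 ∈ T) :
    nullity (G.subMat T) = nullity ((G.delete w).subMat T') + 1 := by
  rw [nullity_subMat_delete G hT]
  refine nullity_eq_nullity_submatrix_add_one_of_duplicate _ (i := ⟨w, hw⟩) (j := ⟨v, hv⟩)
    (by simp) hvw (fun k hk => Subtype.ext (not_not.1 hk)) (fun k => hdup k) fun k => ?_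
  rw [subMat, Matrix.submatrix_apply, Matrix.submatrix_apply, matT_comm, hdup, matT_comm]

end Delete

section Twin

variable {G : MGraph V} {v w : V}

theorem adj_swap_of_twin (htwin : ∀ x, x ≠ v → x ≠ w → G.adj v x = G.adj w x) (x y : V) :
    G.adj (Equiv.swap v w x) (Equiv.swap v w y) = G.adj x y := by
  have htwin' : ∀ x, x ≠ v → x ≠ w → G.adj x v = G.adj x w := fun x hv hw => by
    rw [G.adj_symm, htwin x hv hw, G.adj_symm]
  simp only [Equiv.swap_apply_def]
  split_ifs <;> simp_all [G.adj_irrefl, G.adj_symm w v]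

theorem loop_swap (hl : G.loop v = G.loop w) (x : V) :
    G.loop (Equiv.swap v w x) = G.loop x := by
  simp only [Equiv.swap_apply_def]
  split_ifs <;> simp_all

theorem mark_swap (hm : G.mark v = G.mark w) (x : V) :
    G.mark (Equiv.swap v w x) = G.mark x := by
  simp only [Equiv.swap_apply_def]
  split_ifs <;> simp_all

variable [Fintype V]

theorem nullity_subMat_insert_map_subtype (hlw : G.loop w = false) (hmw : G.mark w = .u)
    (S : Finset {x // x ≠ w}) :
    nullity (G.subMat (insert w (S.map (Embedding.subtype _)))) =
      nullity ((G.delete w).subMat S) :=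
  nullity_subMat_of_keep_eq_false G (by simp [keep_of_mark_u hmw hlw]) fun x => by simp [x.2]

theorem nullity_subMat_map_subtype_of_twin (hvw : v ≠ w) (hadj : G.adj v w = false)
    (hlv : G.loop v = false) (hlw : G.loop w = false)
    (hmv : G.mark v = .u) (hmw : G.mark w = .u)
    (htwin : ∀ x, x ≠ v → x ≠ w → G.adj v x = G.adj w x)
    (S : Finset {x // x ≠ w}) (hS : ⟨v, hvw⟩ ∉ S) :
    nullity (G.subMat (S.map (Embedding.subtype _))) = nullity ((G.delete w).subMat S) + 1 := by
  have hvS : v ∉ S.map (Embedding.subtype _) := by simpa [hvw] using hS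
  have hwS : w ∉ S.map (Embedding.subtype _) := by simp
  refine nullity_subMat_of_duplicate G hvw (by simp [keep_of_mark_u hmv hlv, hvS])
    (by simp [keep_of_mark_u hmw hlw, hwS]) (fun x => ?_) fun x => by simp [x.2]
  by_cases hxw : x = w
  · rw [hxw, matT_self_of_mark_u hmw hlw, matT_of_ne G _ hvw, hadj]
    simp [hwS]
  by_cases hxv : x = v
  · rw [hxv, matT_self_of_mark_u hmv hlv, matT_of_ne G _ hvw.symm, G.adj_symm, hadj]
    simp [hvS]
  rw [matT_of_ne G _ (Ne.symm hxw), matT_of_ne G _ (Ne.symm hxv), htwin x hxv hxw]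

theorem nullity_subMat_map_insert_of_twin (hvw : v ≠ w)
    (hlv : G.loop v = false) (hlw : G.loop w = false)
    (hmv : G.mark v = .u) (hmw : G.mark w = .u)
    (htwin : ∀ x, x ≠ v → x ≠ w → G.adj v x = G.adj w x)
    (S : Finset {x // x ≠ w}) (hS : ⟨v, hvw⟩ ∉ S) :
    nullity (G.subMat ((insert ⟨v, hvw⟩ S).map (Embedding.subtype _))) =
      nullity ((G.delete w).subMat S) := by
  have hvS : v ∉ S.map (Embedding.subtype _) := by simpa [hvw] using hS
  have hswap : (insert ⟨v, hvw⟩ S).map (Embedding.subtype _) =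
      (insert w (S.map (Embedding.subtype _))).map (Equiv.swap v w).toEmbedding := by
    rw [Finset.map_insert, Embedding.subtype_apply, Finset.map_insert, Equiv.coe_toEmbedding,
      Equiv.swap_apply_right, Finset.map_eq_image (Equiv.swap v w).toEmbedding,
      Finset.image_congr (g := id), Finset.image_id]
    intro x hx
    exact Equiv.swap_apply_of_ne_of_ne (by rintro rfl; exact hvS hx) (by rintro rfl; simp at hx)
  rw [hswap, nullity_subMat_map_equiv G _ (adj_swap_of_twin htwin)
    (loop_swap (hlv.trans hlw.symm)) (mark_swap (hmv.trans hmw.symm)),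
    nullity_subMat_insert_map_subtype hlw hmw]

end Twin

end MGraph

/-- let `v ≠ w` be nonadjacent, unlooped twin vertices of a
weighted marked graph `G`, both marked `u`.  Then `[G] = [(G−w)']`, where
`(G−w)'` is `G−w` with the weights of `v` changed to
`α'(v) = α(v)α(w)d + α(v)β(w) + β(v)α(w)` and `β'(v) = β(v)β(w)`. -/
theorem wbracket_twin_uu {V : Type} [DecidableEq V] [Fintype V]
    (G : MGraph V) (v w : V) (hvw : v ≠ w)
    (hadj : G.adj v w = false)
    (hlv : G.loop v = false) (hlw : G.loop w = false)
    (hmv : G.mark v = Mark.u) (hmw : G.mark w = Mark.u)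
    (htwin : ∀ x, x ≠ v → x ≠ w → G.adj v x = G.adj w x)
    {R : Type*} [CommRing R] (d : R) (α β : V → R) :
    G.wbracket d α β =
      (G.delete w).wbracket d
        (fun x => if x.val = v then α v * α w * d + α v * β w + β v * α w else α x.val)
        (fun x => if x.val = v then β v * β w else β x.val) := by
  have hne : ∀ x : {y // y ≠ (⟨v, hvw⟩ : {x // x ≠ w})}, x.1.1 ≠ v :=
    fun x h => x.2 (Subtype.ext h)
  unfold MGraph.wbracket
  congr 1
  simp only [Finset.prod_compl_mul_prod_eq_prod_ite]
  -- reindex both sums by `S ⊆ V ∖ {v, w}` together with the states of `v` and `w`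
  rw [Fintype.sum_finset_eq_sum_finset_subtype_ne w,
    Fintype.sum_finset_eq_sum_finset_subtype_ne (⟨v, hvw⟩ : {x // x ≠ w}),
    Fintype.sum_finset_eq_sum_finset_subtype_ne (⟨v, hvw⟩ : {x // x ≠ w})]
  refine Fintype.sum_congr _ _ fun S => ?_
  have hS : (⟨v, hvw⟩ : {x // x ≠ w}) ∉ S.map (Embedding.subtype _) := by simp
  rw [MGraph.nullity_subMat_map_subtype_of_twin hvw hadj hlv hlw hmv hmw htwin _ hS,
    MGraph.nullity_subMat_insert_map_subtype hlw hmw,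
    MGraph.nullity_subMat_map_insert_of_twin hvw hlv hlw hmv hmw htwin _ hS,
    MGraph.nullity_subMat_insert_map_subtype hlw hmw]
  simp only [Fintype.prod_ite_mem_map_subtype_ne, Fintype.prod_ite_mem_insert_map_subtype_ne,
    hne, if_true, if_false]
  ring
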